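/- (Proposition 2, survival asymptote) Suppose 0 < Ḡ(t) < 1 for all sufficiently large t, and Ḡ(t) → 0 as t → ∞. Then 1 − F^BGMO(t) ∼ (α Ḡ(t))^{θn}/(n B(m,n)) as t → ∞; precisely, the ratio n B(m,n) (1 − F^BGMO(t)) / (α Ḡ(t))^{θn} tends to 1 as t → ∞. -/

import Mathlib

/-- The GMO survival function `F̄^GMO(t) = (α Ḡ(t)/(1 − ᾱ Ḡ(t)))^θ`. -/
noncomputable def FbarGMO (G : ℝ → ℝ) (α θ t : ℝ) : ℝ :=
  (α * (1 - G t) / (1 - (1 - α) * (1 - G t))) ^ θ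

/-- The beta function `B(m,n) = ∫₀¹ v^{m−1}(1−v)^{n−1} dv`. -/
noncomputable def betaFn (m n : ℝ) : ℝ :=
  ∫ v in (0:ℝ)..1, v ^ (m - 1) * (1 - v) ^ (n - 1)

/-- The regularized incomplete beta function ratio
`I_x(m,n) = B(m,n)⁻¹ ∫₀ˣ v^{m−1}(1−v)^{n−1} dv`. -/
noncomputable def incBetaRatio (m n x : ℝ) : ℝ :=
  (betaFn m n)⁻¹ * ∫ v in (0:ℝ)..x, v ^ (m - 1) * (1 - v) ^ (n - 1)

/-- The BGMO-G cdf `F^BGMO(t) = I_{1 − F̄^GMO(t)}(m,n)`. -/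
noncomputable def FBGMO (G : ℝ → ℝ) (α θ m n t : ℝ) : ℝ :=
  incBetaRatio m n (1 - FbarGMO G α θ t)

open Filter

/-! Near `x = 0` the Beta tail `∫_{1-x}^1 v^(m-1) (1-v)^(n-1) dv` equals `x^n / n` up to a factor
between `1` and `(1-x)^(m-1)`, so `n B(m,n) (1 - I_{1-x}(m,n)) ∼ x^n` as `x → 0+`. Apply this at
`x = F̄^GMO(t) → 0`, and note `F̄^GMO(t)^n = (α Ḡ(t))^(θn) / (1 - ᾱ Ḡ(t))^(θn)` with
`1 - ᾱ Ḡ(t) → 1`. -/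

open Topology MeasureTheory Set

section Beta

variable {m n : ℝ}

lemma intervalIntegrable_one_sub_rpow (hn : 0 < n) (x : ℝ) :
    IntervalIntegrable (fun v : ℝ => (1 - v) ^ (n - 1)) volume (1 - x) 1 := by
  simpa using ((intervalIntegral.intervalIntegrable_rpow' (r := n - 1) (a := 0) (b := x)
    (by linarith)).comp_sub_left 1).symm

lemma intervalIntegrable_beta_integrand (hm : 0 < m) (hn : 0 < n) :
    IntervalIntegrable (fun v : ℝ => v ^ (m - 1) * (1 - v) ^ (n - 1)) volume 0 1 := by
  have hleft : IntervalIntegrable (fun v : ℝ => v ^ (m - 1) * (1 - v) ^ (n - 1))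
      volume 0 (1 / 2) := by
    refine (intervalIntegral.intervalIntegrable_rpow' (by linarith)).mul_continuousOn
      (ContinuousOn.rpow_const (by fun_prop) fun v hv => Or.inl ?_)
    rw [uIcc_of_le (by norm_num)] at hv
    linarith [hv.2]
  have hright : IntervalIntegrable (fun v : ℝ => v ^ (m - 1) * (1 - v) ^ (n - 1))
      volume (1 / 2) 1 := by
    have h := intervalIntegrable_one_sub_rpow hn (1 / 2)
    norm_num at h
    refine h.continuousOn_mul (ContinuousOn.rpow_const (by fun_prop) fun v hv => Or.inl ?_)
    rw [uIcc_of_le (by norm_num)] at hv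
    linarith [hv.1]
  exact hleft.trans hright

lemma betaFn_pos (hm : 0 < m) (hn : 0 < n) : 0 < betaFn m n :=
  intervalIntegral.intervalIntegral_pos_of_pos_on (intervalIntegrable_beta_integrand hm hn)
    (fun _ hv => mul_pos (Real.rpow_pos_of_pos hv.1 _)
      (Real.rpow_pos_of_pos (by linarith [hv.2]) _))
    zero_lt_one

lemma betaFn_mul_one_sub_incBetaRatio (hm : 0 < m) (hn : 0 < n) {x : ℝ}
    (hx0 : 0 ≤ x) (hx1 : x ≤ 1) :
    betaFn m n * (1 - incBetaRatio m n (1 - x)) =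
      ∫ v in (1 - x)..1, v ^ (m - 1) * (1 - v) ^ (n - 1) := by
  have hint := intervalIntegrable_beta_integrand hm hn
  have hx : 1 - x ∈ uIcc (0 : ℝ) 1 := by
    rw [uIcc_of_le zero_le_one]
    constructor <;> linarith
  have hsplit := intervalIntegral.integral_add_adjacent_intervals
    (hint.mono_set (uIcc_subset_uIcc left_mem_uIcc hx))
    (hint.mono_set (uIcc_subset_uIcc hx right_mem_uIcc))
  rw [incBetaRatio, mul_sub, mul_one, ← mul_assoc, mul_inv_cancel₀ (betaFn_pos hm hn).ne',
    one_mul, betaFn, ← hsplit, add_sub_cancel_left]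

lemma integral_one_sub_rpow (hn : 0 < n) (x : ℝ) :
    ∫ v in (1 - x)..1, (1 - v) ^ (n - 1) = x ^ n / n := by
  rw [intervalIntegral.integral_comp_sub_left (fun w : ℝ => w ^ (n - 1)), sub_self,
    sub_sub_cancel, integral_rpow (Or.inl (by linarith)), sub_add_cancel,
    Real.zero_rpow hn.ne', sub_zero]

lemma rpow_mem_uIcc_one {a v : ℝ} (r : ℝ) (ha : 0 < a) (hv : v ∈ Icc a 1) :
    v ^ r ∈ uIcc (a ^ r) 1 := by
  rcases le_total 0 r with hr | hr
  · exact mem_uIcc.2 <| Or.inl ⟨Real.rpow_le_rpow ha.le hv.1 hr,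
      Real.rpow_le_one (ha.le.trans hv.1) hv.2 hr⟩
  · exact mem_uIcc.2 <| Or.inr ⟨Real.one_le_rpow_of_pos_of_le_one_of_nonpos (ha.trans_le hv.1)
      hv.2 hr, Real.rpow_le_rpow_of_nonpos ha hv.1 hr⟩

lemma mul_tail_integral_div_rpow_mem_uIcc (hn : 0 < n) {x : ℝ} (hx0 : 0 < x) (hx1 : x < 1) :
    n * (∫ v in (1 - x)..1, v ^ (m - 1) * (1 - v) ^ (n - 1)) / x ^ n ∈
      uIcc ((1 - x) ^ (m - 1)) 1 := by
  set c := (1 - x) ^ (m - 1)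
  have hbound : ∀ v ∈ Icc (1 - x) 1, v ^ (m - 1) ∈ uIcc c 1 := fun v hv =>
    rpow_mem_uIcc_one _ (by linarith) hv
  have hweight : ∀ v ∈ Icc (1 - x) 1, 0 ≤ (1 - v) ^ (n - 1) := fun v hv =>
    Real.rpow_nonneg (by linarith [hv.2]) _
  have hint := intervalIntegrable_one_sub_rpow hn x
  have hint' : IntervalIntegrable (fun v : ℝ => v ^ (m - 1) * (1 - v) ^ (n - 1))
      volume (1 - x) 1 := by
    refine hint.continuousOn_mul (ContinuousOn.rpow_const continuousOn_id fun v hv => Or.inl ?_)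
    rw [uIcc_of_le (by linarith)] at hv
    exact (show (0 : ℝ) < v by linarith [hv.1]).ne'
  have hlo : (c ⊓ 1) * (x ^ n / n) ≤ ∫ v in (1 - x)..1, v ^ (m - 1) * (1 - v) ^ (n - 1) := by
    rw [← integral_one_sub_rpow hn, ← intervalIntegral.integral_const_mul]
    exact intervalIntegral.integral_mono_on (by linarith) (hint.const_mul _) hint' fun v hv =>
      mul_le_mul_of_nonneg_right (hbound v hv).1 (hweight v hv)
  have hhi : ∫ v in (1 - x)..1, v ^ (m - 1) * (1 - v) ^ (n - 1) ≤ (c ⊔ 1) * (x ^ n / n) := by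
    rw [← integral_one_sub_rpow hn, ← intervalIntegral.integral_const_mul]
    exact intervalIntegral.integral_mono_on (by linarith) hint' (hint.const_mul _) fun v hv =>
      mul_le_mul_of_nonneg_right (hbound v hv).2 (hweight v hv)
  have hxn : 0 < x ^ n := Real.rpow_pos_of_pos hx0 n
  rw [mul_div_assoc', div_le_iff₀ hn] at hlo
  rw [mul_div_assoc', le_div_iff₀ hn] at hhi
  exact ⟨(le_div_iff₀ hxn).2 (by linarith), (div_le_iff₀ hxn).2 (by linarith)⟩

theorem tendsto_betaFn_mul_one_sub_incBetaRatio_div_rpow (hm : 0 < m) (hn : 0 < n) :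
    Tendsto (fun x => n * betaFn m n * (1 - incBetaRatio m n (1 - x)) / x ^ n)
      (𝓝[>] 0) (𝓝 1) := by
  have hc : Tendsto (fun x : ℝ => (1 - x) ^ (m - 1)) (𝓝[>] 0) (𝓝 1) := by
    have h : Tendsto (fun x : ℝ => (1 - x) ^ (m - 1)) (𝓝 0) (𝓝 ((1 - 0) ^ (m - 1))) :=
      (tendsto_const_nhds.sub tendsto_id).rpow_const (Or.inl (by norm_num))
    simpa using h.mono_left nhdsWithin_le_nhds
  have hmem : ∀ᶠ x in 𝓝[>] 0,
      n * betaFn m n * (1 - incBetaRatio m n (1 - x)) / x ^ n ∈ uIcc ((1 - x) ^ (m - 1)) 1 := by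
    filter_upwards [Ioo_mem_nhdsGT one_pos] with x hx
    rw [mul_assoc, betaFn_mul_one_sub_incBetaRatio hm hn hx.1.le hx.2.le]
    exact mul_tail_integral_div_rpow_mem_uIcc hn hx.1 hx.2
  have hone : Tendsto (fun _ : ℝ => (1 : ℝ)) (𝓝[>] 0) (𝓝 1) := tendsto_const_nhds
  exact tendsto_of_tendsto_of_tendsto_of_le_of_le' (by simpa using hc.min hone)
    (by simpa using hc.max hone) (hmem.mono fun _ h => h.1) (hmem.mono fun _ h => h.2)

end Beta

section GMO

variable {G : ℝ → ℝ} {α θ t : ℝ}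

lemma FbarGMO_pos (hα : 0 < α) (h0 : 0 < 1 - G t) (h1 : 1 - G t ≤ 1) : 0 < FbarGMO G α θ t :=
  Real.rpow_pos_of_pos (div_pos (mul_pos hα h0) (by nlinarith)) θ

lemma FbarGMO_rpow (hα : 0 ≤ α) (h0 : 0 ≤ 1 - G t) (h1 : 1 - G t ≤ 1) (n : ℝ) :
    FbarGMO G α θ t ^ n =
      (α * (1 - G t)) ^ (θ * n) / (1 - (1 - α) * (1 - G t)) ^ (θ * n) := by
  have hD : 0 ≤ 1 - (1 - α) * (1 - G t) := by nlinarith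
  rw [FbarGMO, ← Real.rpow_mul (div_nonneg (mul_nonneg hα h0) hD),
    Real.div_rpow (mul_nonneg hα h0) hD]

lemma tendsto_FbarGMO {l : Filter ℝ} (hθ : 0 < θ) (hlim : Tendsto (fun t => 1 - G t) l (𝓝 0)) :
    Tendsto (FbarGMO G α θ) l (𝓝 0) := by
  have hD : Tendsto (fun t => 1 - (1 - α) * (1 - G t)) l (𝓝 1) := by
    simpa using tendsto_const_nhds.sub (hlim.const_mul (1 - α))
  have h := ((hlim.const_mul α).div hD one_ne_zero).rpow_const (Or.inr hθ.le)
  rw [mul_zero, zero_div, Real.zero_rpow hθ.ne'] at h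
  exact h

end GMO

/-- Proposition 2, survival asymptote: suppose `0 < Ḡ(t) < 1` for all
sufficiently large `t`, and `Ḡ(t) → 0` as `t → ∞`. Then
`1 − F^BGMO(t) ∼ (α Ḡ(t))^{θn}/(n B(m,n))` as `t → ∞`; precisely, the ratio
`n B(m,n) (1 − F^BGMO(t)) / (α Ḡ(t))^{θn}` tends to `1` as `t → ∞`. -/
theorem bgmo_survival_asymptote (G : ℝ → ℝ) (α θ m n : ℝ)
    (hα : 0 < α) (hθ : 0 < θ) (hm : 0 < m) (hn : 0 < n)
    (hev : ∀ᶠ t in atTop, 0 < 1 - G t ∧ 1 - G t < 1)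
    (hlim : Tendsto (fun t : ℝ => 1 - G t) atTop (nhds 0)) :
    Tendsto (fun t : ℝ =>
        n * betaFn m n * (1 - FBGMO G α θ m n t) / (α * (1 - G t)) ^ (θ * n))
      atTop (nhds 1) := by
  have hD : Tendsto (fun t => 1 - (1 - α) * (1 - G t)) atTop (𝓝 1) := by
    simpa using tendsto_const_nhds.sub (hlim.const_mul (1 - α))
  have hFbar : Tendsto (FbarGMO G α θ) atTop (𝓝[>] 0) :=
    tendsto_nhdsWithin_iff.2
      ⟨tendsto_FbarGMO hθ hlim, hev.mono fun _ ht => FbarGMO_pos hα ht.1 ht.2.le⟩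
  have hcorr : Tendsto (fun t => ((1 - (1 - α) * (1 - G t)) ^ (θ * n))⁻¹) atTop (𝓝 1) := by
    simpa using (hD.rpow_const (Or.inl one_ne_zero)).inv₀ (by norm_num)
  have hprod := ((tendsto_betaFn_mul_one_sub_incBetaRatio_div_rpow hm hn).comp hFbar).mul hcorr
  rw [mul_one] at hprod
  refine hprod.congr' ?_
  filter_upwards [hev] with t ⟨h0, h1⟩
  have hD0 : 0 < 1 - (1 - α) * (1 - G t) := by nlinarith
  simp only [Function.comp, FBGMO, FbarGMO_rpow hα.le h0.le h1.le]
  rw [div_div_eq_mul_div, mul_div_right_comm,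
    mul_inv_cancel_right₀ (Real.rpow_pos_of_pos hD0 (θ * n)).ne']
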